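/- arXiv:0706.0315 — 9 statements merged into one kernel-verified Lean document; each statement's English description precedes it below -/
import Mathlib

section
/- Let R be a ring with identity, A an R-bimodule, and f, g : R × R → A functions satisfying: f(x,0) = f(0,y) = 0; g(x,0) = g(0,y) = g(1,y) = g(y,1) = 0; f(x,y) = f(y,x); f(y,z) − f(x+y,z) + f(x,y+z) − f(x,y) = 0; x·g(y,z) − g(xy,z) + g(x,yz) − g(x,y)·z = 0; x·f(y,z) − f(xy,xz) = g(x,y) + g(x,z) − g(x,y+z); and f(x,y)·z − f(xz,yz) = g(x,z) + g(y,z) − g(x+y,z) for all x, y, z ∈ R. Then the set S = A × R with operations (a,x) + (b,y) = (a + b + f(x,y), x+y) and (a,x)·(b,y) = (a·y + x·b + g(x,y), xy) is a ring with additive identity (0,0) and multiplicative identity (0,1); the projection σ : S → R, σ(a,x) = x, is a surjective ring homomorphism with σ(0,1) = 1; its kernel is A × {0}, and the product of any two elements of the kernel is zero. -/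
/-!
On the `R`-component the crossed product is just `R`, so every ring axiom of `S = A × R`
reduces to an identity in `A`: associativity and commutativity of `+` are the cocycle
condition and symmetry of `f`, associativity of `·` is the cocycle condition of `g`, and the
two distributive laws are exactly the two distributivity relations between `f` and `g`.
The normalizations of `f` and `g` make `(0,0)` and `(0,1)` neutral, and the product of
`(a,0)` and `(b,0)` is `a·0 + 0·b + g(0,0) = 0`.
-/

namespace CrossedProduct

section Additive

variable {R A : Type*} [AddCommGroup R] [AddCommGroup A]

def add (f : R → R → A) (p q : A × R) : A × R :=
  (p.1 + q.1 + f p.2 q.2, p.2 + q.2)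

def neg (f : R → R → A) (p : A × R) : A × R :=
  (-p.1 - f p.2 (-p.2), -p.2)

variable {f : R → R → A}

theorem add_assoc (hf : ∀ x y z, f y z - f (x + y) z + f x (y + z) - f x y = 0)
    (p q r : A × R) : add f (add f p q) r = add f p (add f q r) := by
  refine Prod.ext ?_ (_root_.add_assoc _ _ _)
  rw [eq_comm, ← sub_eq_zero, ← hf p.2 q.2 r.2]
  simp only [add]
  abel

theorem add_comm (hf : ∀ x y, f x y = f y x) (p q : A × R) : add f p q = add f q p :=
  Prod.ext (by simp only [add, hf p.2 q.2]; abel) (_root_.add_comm _ _)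

theorem zero_add (hf : ∀ y, f 0 y = 0) (p : A × R) : add f (0, 0) p = p :=
  Prod.ext (by simp [add, hf]) (_root_.zero_add _)

theorem add_neg (p : A × R) : add f p (neg f p) = (0, 0) :=
  Prod.ext (by simp only [add, neg]; abel) (add_neg_cancel _)

end Additive

section Multiplicative

variable {R A : Type*} [Ring R] [AddCommGroup A]

def mul (sl : R → A → A) (sr : A → R → A) (g : R → R → A) (p q : A × R) : A × R :=
  (sr p.1 q.2 + sl p.2 q.1 + g p.2 q.2, p.2 * q.2)

variable {sl : R → A → A} {sr : A → R → A} {f g : R → R → A}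

theorem mul_assoc
    (hsl_add : ∀ x (a b : A), sl x (a + b) = sl x a + sl x b)
    (hsr_add : ∀ (a b : A) x, sr (a + b) x = sr a x + sr b x)
    (hsl_mul : ∀ x y (a : A), sl (x * y) a = sl x (sl y a))
    (hsr_mul : ∀ (a : A) x y, sr a (x * y) = sr (sr a x) y)
    (hslr : ∀ x (a : A) y, sr (sl x a) y = sl x (sr a y))
    (hg : ∀ x y z, sl x (g y z) - g (x * y) z + g x (y * z) - sr (g x y) z = 0)
    (p q r : A × R) :
    mul sl sr g (mul sl sr g p q) r = mul sl sr g p (mul sl sr g q r) := by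
  refine Prod.ext ?_ (_root_.mul_assoc _ _ _)
  simp only [mul, hsr_add, hsl_add, ← hsr_mul, hslr, hsl_mul]
  rw [eq_comm, ← sub_eq_zero, ← hg p.2 q.2 r.2]
  abel

theorem one_mul (hsl_one : ∀ a : A, sl 1 a = a) (hzero_sr : ∀ x, sr 0 x = 0)
    (hg : ∀ y, g 1 y = 0) (p : A × R) : mul sl sr g (0, 1) p = p :=
  Prod.ext (by simp [mul, hsl_one, hzero_sr, hg]) (_root_.one_mul _)

theorem mul_one (hsr_one : ∀ a : A, sr a 1 = a) (hsl_zero : ∀ x, sl x 0 = 0)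
    (hg : ∀ x, g x 1 = 0) (p : A × R) : mul sl sr g p (0, 1) = p :=
  Prod.ext (by simp [mul, hsr_one, hsl_zero, hg]) (_root_.mul_one _)

theorem mul_add
    (hsl_add : ∀ x (a b : A), sl x (a + b) = sl x a + sl x b)
    (hsr_add : ∀ (a : A) x y, sr a (x + y) = sr a x + sr a y)
    (hdist : ∀ x y z, sl x (f y z) - f (x * y) (x * z) = g x y + g x z - g x (y + z))
    (p q r : A × R) :
    mul sl sr g p (add f q r) = add f (mul sl sr g p q) (mul sl sr g p r) := by
  refine Prod.ext ?_ (_root_.mul_add _ _ _)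
  simp only [mul, add, hsr_add, hsl_add]
  rw [← sub_eq_zero, ← sub_eq_zero.mpr (hdist p.2 q.2 r.2)]
  abel

theorem add_mul
    (hsl_add : ∀ x y (a : A), sl (x + y) a = sl x a + sl y a)
    (hsr_add : ∀ (a b : A) x, sr (a + b) x = sr a x + sr b x)
    (hdist : ∀ x y z, sr (f x y) z - f (x * z) (y * z) = g x z + g y z - g (x + y) z)
    (p q r : A × R) :
    mul sl sr g (add f p q) r = add f (mul sl sr g p r) (mul sl sr g q r) := by
  refine Prod.ext ?_ (_root_.add_mul _ _ _)
  simp only [mul, add, hsr_add, hsl_add]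
  rw [← sub_eq_zero, ← sub_eq_zero.mpr (hdist p.2 q.2 r.2)]
  abel

theorem mul_eq_zero_of_snd_eq_zero (hsr_zero : ∀ a : A, sr a 0 = 0)
    (hzero_sl : ∀ a : A, sl 0 a = 0) (hg : g 0 0 = 0) {p q : A × R}
    (hp : p.2 = 0) (hq : q.2 = 0) : mul sl sr g p q = (0, 0) :=
  Prod.ext (by simp [mul, hp, hq, hsr_zero, hzero_sl, hg]) (by simp [mul, hp])

end Multiplicative

end CrossedProduct

open CrossedProduct in
theorem crossed_product_is_singular_extension_general
    {R A : Type*} [Ring R] [AddCommGroup A]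
    -- the `R`-bimodule structure on `A`
    (sl : R → A → A) (sr : A → R → A)
    (hsl_add : ∀ x (a b : A), sl x (a + b) = sl x a + sl x b)
    (hsl_add' : ∀ x y (a : A), sl (x + y) a = sl x a + sl y a)
    (hsr_add : ∀ (a b : A) x, sr (a + b) x = sr a x + sr b x)
    (hsr_add' : ∀ (a : A) x y, sr a (x + y) = sr a x + sr a y)
    (hsl_mul : ∀ x y (a : A), sl (x * y) a = sl x (sl y a))
    (hsr_mul : ∀ (a : A) x y, sr a (x * y) = sr (sr a x) y)
    (hslr : ∀ x (a : A) y, sr (sl x a) y = sl x (sr a y))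
    (hsl_one : ∀ a : A, sl 1 a = a)
    (hsr_one : ∀ a : A, sr a 1 = a)
    -- the factor sets and their relations (2)-(6)
    (f g : R → R → A)
    (hf0 : ∀ x y : R, f x 0 = 0 ∧ f 0 y = 0)
    (hg0 : ∀ x y : R, g x 0 = 0 ∧ g 0 y = 0 ∧ g 1 y = 0 ∧ g y 1 = 0)
    (hfcomm : ∀ x y : R, f x y = f y x)
    (hfcocycle : ∀ x y z : R, f y z - f (x + y) z + f x (y + z) - f x y = 0)
    (hgcocycle : ∀ x y z : R,
      sl x (g y z) - g (x * y) z + g x (y * z) - sr (g x y) z = 0)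
    (hldist : ∀ x y z : R,
      sl x (f y z) - f (x * y) (x * z) = g x y + g x z - g x (y + z))
    (hrdist : ∀ x y z : R,
      sr (f x y) z - f (x * z) (y * z) = g x z + g y z - g (x + y) z)
    -- the crossed-product operations on `S = A × R`
    (add' mul' : A × R → A × R → A × R)
    (hadd' : ∀ p q : A × R, add' p q = (p.1 + q.1 + f p.2 q.2, p.2 + q.2))
    (hmul' : ∀ p q : A × R,
      mul' p q = (sr p.1 q.2 + sl p.2 q.1 + g p.2 q.2, p.2 * q.2)) :
    -- `S` is a ring:
    (∀ p q r : A × R, add' (add' p q) r = add' p (add' q r)) ∧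
    (∀ p q : A × R, add' p q = add' q p) ∧
    (∀ p : A × R, add' ((0 : A), (0 : R)) p = p) ∧
    (∀ p : A × R, ∃ q : A × R, add' p q = ((0 : A), (0 : R))) ∧
    (∀ p q r : A × R, mul' (mul' p q) r = mul' p (mul' q r)) ∧
    (∀ p : A × R, mul' ((0 : A), (1 : R)) p = p ∧ mul' p ((0 : A), (1 : R)) = p) ∧
    (∀ p q r : A × R, mul' p (add' q r) = add' (mul' p q) (mul' p r)) ∧
    (∀ p q r : A × R, mul' (add' p q) r = add' (mul' p r) (mul' q r)) ∧
    -- the projection `σ (a, x) = x` is a surjective ring homomorphism with `σ (0,1) = 1`: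
    (∀ x : R, ∃ p : A × R, p.2 = x) ∧
    (∀ p q : A × R, (add' p q).2 = p.2 + q.2) ∧
    (∀ p q : A × R, (mul' p q).2 = p.2 * q.2) ∧
    (((0 : A), (1 : R)).2 = (1 : R)) ∧
    -- its kernel is `A × {0}`:
    (∀ p : A × R, p.2 = 0 ↔ ∃ a : A, p = (a, (0 : R))) ∧
    -- the kernel has null multiplication:
    (∀ p q : A × R, p.2 = 0 → q.2 = 0 → mul' p q = ((0 : A), (0 : R))) := by
  obtain rfl : add' = add f := funext fun p => funext (hadd' p)
  obtain rfl : mul' = mul sl sr g := funext fun p => funext (hmul' p)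
  have hsl_zero x : sl x 0 = 0 := (AddMonoidHom.mk' (sl x) (hsl_add x)).map_zero
  have hzero_sl a : sl 0 a = 0 := (AddMonoidHom.mk' (sl · a) (hsl_add' · · a)).map_zero
  have hzero_sr x : sr 0 x = 0 := (AddMonoidHom.mk' (sr · x) (hsr_add · · x)).map_zero
  have hsr_zero a : sr a 0 = 0 := (AddMonoidHom.mk' (sr a) (hsr_add' a)).map_zero
  exact ⟨add_assoc hfcocycle, add_comm hfcomm, zero_add fun y => (hf0 0 y).2,
    fun p => ⟨neg f p, add_neg p⟩,
    mul_assoc hsl_add hsr_add hsl_mul hsr_mul hslr hgcocycle,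
    fun p => ⟨one_mul hsl_one hzero_sr (fun y => (hg0 0 y).2.2.1) p,
      mul_one hsr_one hsl_zero (fun x => (hg0 0 x).2.2.2) p⟩,
    mul_add hsl_add hsr_add' hldist, add_mul hsl_add' hsr_add hrdist,
    fun x => ⟨(0, x), rfl⟩, fun _ _ => rfl, fun _ _ => rfl, rfl,
    fun p => ⟨fun h => ⟨p.1, Prod.ext rfl h⟩, by rintro ⟨a, rfl⟩; rfl⟩,
    fun _ _ => mul_eq_zero_of_snd_eq_zero hsr_zero hzero_sl (hg0 0 0).1⟩

/-- From an `R`-bimodule `A` and factor sets `f, g` satisfying the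
normalization, symmetry, cocycle and distributivity relations, the crossed-product
operations make `S = A × R` a ring, the projection onto `R` is a surjective ring
homomorphism sending `(0,1)` to `1`, its kernel is `A × {0}`, and any two kernel
elements multiply to zero. -/
theorem crossed_product_is_singular_extension
    {R A : Type*} [Ring R] [Nontrivial R] [AddCommGroup A]
    -- the `R`-bimodule structure on `A`
    (sl : R → A → A) (sr : A → R → A)
    (hsl_add : ∀ x (a b : A), sl x (a + b) = sl x a + sl x b)
    (hsl_add' : ∀ x y (a : A), sl (x + y) a = sl x a + sl y a)
    (hsr_add : ∀ (a b : A) x, sr (a + b) x = sr a x + sr b x)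
    (hsr_add' : ∀ (a : A) x y, sr a (x + y) = sr a x + sr a y)
    (hsl_mul : ∀ x y (a : A), sl (x * y) a = sl x (sl y a))
    (hsr_mul : ∀ (a : A) x y, sr a (x * y) = sr (sr a x) y)
    (hslr : ∀ x (a : A) y, sr (sl x a) y = sl x (sr a y))
    (hsl_one : ∀ a : A, sl 1 a = a)
    (hsr_one : ∀ a : A, sr a 1 = a)
    -- the factor sets and their relations (2)-(6)
    (f g : R → R → A)
    (hf0 : ∀ x y : R, f x 0 = 0 ∧ f 0 y = 0)
    (hg0 : ∀ x y : R, g x 0 = 0 ∧ g 0 y = 0 ∧ g 1 y = 0 ∧ g y 1 = 0)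
    (hfcomm : ∀ x y : R, f x y = f y x)
    (hfcocycle : ∀ x y z : R, f y z - f (x + y) z + f x (y + z) - f x y = 0)
    (hgcocycle : ∀ x y z : R,
      sl x (g y z) - g (x * y) z + g x (y * z) - sr (g x y) z = 0)
    (hldist : ∀ x y z : R,
      sl x (f y z) - f (x * y) (x * z) = g x y + g x z - g x (y + z))
    (hrdist : ∀ x y z : R,
      sr (f x y) z - f (x * z) (y * z) = g x z + g y z - g (x + y) z)
    -- the crossed-product operations on `S = A × R`
    (add' mul' : A × R → A × R → A × R)
    (hadd' : ∀ p q : A × R, add' p q = (p.1 + q.1 + f p.2 q.2, p.2 + q.2))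
    (hmul' : ∀ p q : A × R,
      mul' p q = (sr p.1 q.2 + sl p.2 q.1 + g p.2 q.2, p.2 * q.2)) :
    -- `S` is a ring:
    (∀ p q r : A × R, add' (add' p q) r = add' p (add' q r)) ∧
    (∀ p q : A × R, add' p q = add' q p) ∧
    (∀ p : A × R, add' ((0 : A), (0 : R)) p = p) ∧
    (∀ p : A × R, ∃ q : A × R, add' p q = ((0 : A), (0 : R))) ∧
    (∀ p q r : A × R, mul' (mul' p q) r = mul' p (mul' q r)) ∧
    (∀ p : A × R, mul' ((0 : A), (1 : R)) p = p ∧ mul' p ((0 : A), (1 : R)) = p) ∧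
    (∀ p q r : A × R, mul' p (add' q r) = add' (mul' p q) (mul' p r)) ∧
    (∀ p q r : A × R, mul' (add' p q) r = add' (mul' p r) (mul' q r)) ∧
    -- the projection `σ (a, x) = x` is a surjective ring homomorphism with `σ (0,1) = 1`:
    (∀ x : R, ∃ p : A × R, p.2 = x) ∧
    (∀ p q : A × R, (add' p q).2 = p.2 + q.2) ∧
    (∀ p q : A × R, (mul' p q).2 = p.2 * q.2) ∧
    (((0 : A), (1 : R)).2 = (1 : R)) ∧
    -- its kernel is `A × {0}`:
    (∀ p : A × R, p.2 = 0 ↔ ∃ a : A, p = (a, (0 : R))) ∧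
    -- the kernel has null multiplication:
    (∀ p q : A × R, p.2 = 0 → q.2 = 0 → mul' p q = ((0 : A), (0 : R))) :=
  crossed_product_is_singular_extension_general sl sr hsl_add hsl_add' hsr_add hsr_add' hsl_mul
    hsr_mul hslr hsl_one hsr_one f g hf0 hg0 hfcomm hfcocycle hgcocycle hldist hrdist add' mul'
    hadd' hmul'
end

section
/- In the pre-extension setting: the bicenter K_A is a two-sided ideal of A; for every x ∈ R, φ_x(K_A) ⊆ K_A and ψ_x(K_A) ⊆ K_A; and the restrictions of φ_x and ψ_x to K_A are unchanged if φ_x is replaced by φ_x + l_b or ψ_x is replaced by ψ_x + r_b for any b ∈ A. Hence K_A becomes an R-bimodule under x·c = φ_x(c), c·x = ψ_x(c), and this structure is independent of the choice of φ_x ∈ φ_x + L(A) and ψ_x ∈ ψ_x + R(A). -/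
/-! Each relation of a pre-extension holds up to a left or right multiplication by an element
of `A`, and such multiplications vanish on the bicenter; restricted to `K_A`, the relations
therefore become exactly the bimodule axioms. -/

variable {R A : Type*}

/-- The bicenter `K_A = {c ∈ A : c·a = 0 = a·c for all a}`. -/
def bicenter (A : Type*) [NonUnitalRing A] : Set A :=
  {c | ∀ b : A, c * b = 0 ∧ b * c = 0}

/-- A pre-extension datum `(φ, ψ, f, g)` of the ring `A` by the ring `R`:
`φ_x, ψ_x ∈ End_ℤ(A)` and `f, g : R² → A` satisfying the relations (10) and the
defining relations of the factor sets. -/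
def IsPreExtension [Ring R] [NonUnitalRing A]
    (φ ψ : R → AddMonoid.End A) (f g : R → R → A) : Prop :=
  (∀ a : A, φ 1 a = a) ∧
  (∀ a : A, ψ 1 a = a) ∧
  (∀ (x : R) (a b : A), a * φ x b = ψ x a * b) ∧
  (∀ (x : R) (a b : A), φ x (a * b) = φ x a * b) ∧
  (∀ (x : R) (a b : A), ψ x (b * a) = b * ψ x a) ∧
  (∀ (x : R) (a b : A), ψ x b * a = b * φ x a) ∧
  (∀ (x y : R) (a : A), φ x (ψ y a) = ψ y (φ x a)) ∧
  (∀ (x y : R) (a : A), φ x (φ y a) = φ (x * y) a + g x y * a) ∧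
  (∀ (x y : R) (a : A), ψ y (ψ x a) = ψ (x * y) a + a * g x y) ∧
  (∀ (x y : R) (a : A), φ x a + φ y a = φ (x + y) a + f x y * a) ∧
  (∀ (x y : R) (a : A), ψ x a + ψ y a = ψ (x + y) a + a * f x y)

variable [Ring R] [NonUnitalRing A]

/-- The obstruction component `ξ`. -/
def xiObs (f : R → R → A) (x y z : R) : A :=
  f y z - f (x + y) z + f x (y + z) - f x y

/-- The obstruction component `η`. -/
def etaObs (f : R → R → A) (x y : R) : A :=
  f x y - f y x

/-- The obstruction component `α`. -/
def alphaObs (φ ψ : R → AddMonoid.End A) (g : R → R → A) (x y z : R) : A :=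
  φ x (g y z) - g (x * y) z + g x (y * z) - ψ z (g x y)

/-- The obstruction component `λ`. -/
def lambdaObs (φ : R → AddMonoid.End A) (f g : R → R → A) (x y z : R) : A :=
  φ x (f y z) - f (x * y) (x * z) + g x (y + z) - g x y - g x z

/-- The obstruction component `ρ`. -/
def rhoObs (ψ : R → AddMonoid.End A) (f g : R → R → A) (x y z : R) : A :=
  ψ z (f x y) - f (x * z) (y * z) + g (x + y) z - g x z - g y z

theorem zero_mem_bicenter : (0 : A) ∈ bicenter A :=
  fun b => ⟨zero_mul b, mul_zero b⟩

theorem add_mem_bicenter {c c' : A} (hc : c ∈ bicenter A) (hc' : c' ∈ bicenter A) :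
    c + c' ∈ bicenter A := fun b =>
  ⟨by rw [add_mul, (hc b).1, (hc' b).1, add_zero], by rw [mul_add, (hc b).2, (hc' b).2, add_zero]⟩

theorem neg_mem_bicenter {c : A} (hc : c ∈ bicenter A) : -c ∈ bicenter A := fun b =>
  ⟨by rw [neg_mul, (hc b).1, neg_zero], by rw [mul_neg, (hc b).2, neg_zero]⟩

theorem mul_mem_bicenter_left {c : A} (a : A) (hc : c ∈ bicenter A) : a * c ∈ bicenter A :=
  fun b => ⟨by rw [mul_assoc, (hc b).1, mul_zero], by rw [← mul_assoc, (hc _).2]⟩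

theorem mul_mem_bicenter_right {c : A} (a : A) (hc : c ∈ bicenter A) : c * a ∈ bicenter A :=
  fun b => ⟨by rw [mul_assoc, (hc _).1], by rw [← mul_assoc, (hc b).2, zero_mul]⟩

namespace IsPreExtension

variable {φ ψ : R → AddMonoid.End A} {f g : R → R → A}

theorem phi_mem_bicenter (h : IsPreExtension φ ψ f g) (x : R) {c : A}
    (hc : c ∈ bicenter A) : φ x c ∈ bicenter A := by
  obtain ⟨-, -, h_mul_phi, h_phi_mul, -⟩ := h
  exact fun b => ⟨by rw [← h_phi_mul, (hc b).1, map_zero], by rw [h_mul_phi, (hc _).2]⟩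

theorem psi_mem_bicenter (h : IsPreExtension φ ψ f g) (x : R) {c : A}
    (hc : c ∈ bicenter A) : ψ x c ∈ bicenter A := by
  obtain ⟨-, -, -, -, h_psi_mul, h_psi_mul_phi, -⟩ := h
  exact fun b => ⟨by rw [h_psi_mul_phi, (hc _).1], by rw [← h_psi_mul, (hc b).2, map_zero]⟩

theorem phi_add_apply (h : IsPreExtension φ ψ f g) (x y : R) {c : A}
    (hc : c ∈ bicenter A) : φ (x + y) c = φ x c + φ y c := by
  obtain ⟨-, -, -, -, -, -, -, -, -, h_add, -⟩ := h
  rw [h_add, (hc _).2, add_zero]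

theorem phi_mul_apply (h : IsPreExtension φ ψ f g) (x y : R) {c : A}
    (hc : c ∈ bicenter A) : φ (x * y) c = φ x (φ y c) := by
  obtain ⟨-, -, -, -, -, -, -, h_mul, -⟩ := h
  rw [h_mul, (hc _).2, add_zero]

theorem psi_add_apply (h : IsPreExtension φ ψ f g) (x y : R) {c : A}
    (hc : c ∈ bicenter A) : ψ (x + y) c = ψ x c + ψ y c := by
  obtain ⟨-, -, -, -, -, -, -, -, -, -, h_add⟩ := h
  rw [h_add, (hc _).1, add_zero]

theorem psi_mul_apply (h : IsPreExtension φ ψ f g) (x y : R) {c : A}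
    (hc : c ∈ bicenter A) : ψ (x * y) c = ψ y (ψ x c) := by
  obtain ⟨-, -, -, -, -, -, -, -, h_mul, -⟩ := h
  rw [h_mul, (hc _).1, add_zero]

end IsPreExtension

theorem bicenter_bimodule_structure_general
    (φ ψ : R → AddMonoid.End A) (f g : R → R → A)
    (h : IsPreExtension φ ψ f g) :
    -- K_A is a two-sided ideal of A
    ((0 : A) ∈ bicenter A) ∧
    (∀ c c' : A, c ∈ bicenter A → c' ∈ bicenter A → c + c' ∈ bicenter A) ∧
    (∀ c : A, c ∈ bicenter A → -c ∈ bicenter A) ∧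
    (∀ c a : A, c ∈ bicenter A → a * c ∈ bicenter A ∧ c * a ∈ bicenter A) ∧
    -- φ_x and ψ_x preserve K_A
    (∀ (x : R) (c : A), c ∈ bicenter A → φ x c ∈ bicenter A ∧ ψ x c ∈ bicenter A) ∧
    -- the restrictions to K_A do not change under φ_x ↦ φ_x + l_b, ψ_x ↦ ψ_x + r_b
    (∀ (x : R) (b c : A), c ∈ bicenter A →
      φ x c + b * c = φ x c ∧ ψ x c + c * b = ψ x c) ∧
    -- K_A is an R-bimodule under x·c = φ_x(c), c·x = ψ_x(c)
    (∀ c ∈ bicenter A, ∀ x y : R,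
      φ (x + y) c = φ x c + φ y c ∧
      φ (x * y) c = φ x (φ y c) ∧
      φ 1 c = c ∧
      ψ (x + y) c = ψ x c + ψ y c ∧
      ψ (x * y) c = ψ y (ψ x c) ∧
      ψ 1 c = c ∧
      φ x (ψ y c) = ψ y (φ x c)) := by
  have ⟨h_phi_one, h_psi_one, _, _, _, _, h_comm, _⟩ := h
  refine ⟨zero_mem_bicenter, fun _ _ => add_mem_bicenter, fun _ => neg_mem_bicenter,
    fun c a hc => ⟨mul_mem_bicenter_left a hc, mul_mem_bicenter_right a hc⟩,
    fun x c hc => ⟨h.phi_mem_bicenter x hc, h.psi_mem_bicenter x hc⟩,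
    fun x b c hc => ⟨by rw [(hc b).2, add_zero], by rw [(hc b).1, add_zero]⟩,
    fun c hc x y => ⟨h.phi_add_apply x y hc, h.phi_mul_apply x y hc, h_phi_one c,
      h.psi_add_apply x y hc, h.psi_mul_apply x y hc, h_psi_one c, h_comm x y c⟩⟩

/-- The bicenter `K_A` is a two-sided ideal of `A`, stable under every
`φ_x` and `ψ_x`; the restrictions of `φ_x, ψ_x` to `K_A` are unchanged when `φ_x` is
replaced by `φ_x + l_b` or `ψ_x` by `ψ_x + r_b`; and `x·c = φ_x(c)`, `c·x = ψ_x(c)`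
make `K_A` an `R`-bimodule. -/
theorem bicenter_bimodule_structure
    [Nontrivial R] (φ ψ : R → AddMonoid.End A) (f g : R → R → A)
    (h : IsPreExtension φ ψ f g) :
    -- K_A is a two-sided ideal of A
    ((0 : A) ∈ bicenter A) ∧
    (∀ c c' : A, c ∈ bicenter A → c' ∈ bicenter A → c + c' ∈ bicenter A) ∧
    (∀ c : A, c ∈ bicenter A → -c ∈ bicenter A) ∧
    (∀ c a : A, c ∈ bicenter A → a * c ∈ bicenter A ∧ c * a ∈ bicenter A) ∧
    -- φ_x and ψ_x preserve K_A
    (∀ (x : R) (c : A), c ∈ bicenter A → φ x c ∈ bicenter A ∧ ψ x c ∈ bicenter A) ∧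
    -- the restrictions to K_A do not change under φ_x ↦ φ_x + l_b, ψ_x ↦ ψ_x + r_b
    (∀ (x : R) (b c : A), c ∈ bicenter A →
      φ x c + b * c = φ x c ∧ ψ x c + c * b = ψ x c) ∧
    -- K_A is an R-bimodule under x·c = φ_x(c), c·x = ψ_x(c)
    (∀ c ∈ bicenter A, ∀ x y : R,
      φ (x + y) c = φ x c + φ y c ∧
      φ (x * y) c = φ x (φ y c) ∧
      φ 1 c = c ∧
      ψ (x + y) c = ψ x c + ψ y c ∧
      ψ (x * y) c = ψ y (ψ x c) ∧
      ψ 1 c = c ∧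
      φ x (ψ y c) = ψ y (φ x c)) :=
  bicenter_bimodule_structure_general φ ψ f g h
end

section
/- In the pre-extension setting, the obstruction component α(x,y,z) = φ_x(g(y,z)) − g(xy,z) + g(x,yz) − ψ_z(g(x,y)) belongs to the bicenter K_A for all x, y, z ∈ R, i.e. α(x,y,z)·b = 0 = b·α(x,y,z) for all b ∈ A. -/
variable {R A : Type*}

variable [Ring R] [NonUnitalRing A]

/-! Expanding `φ_x φ_y φ_z b` in the two ways allowed by `φ_x ∘ φ_y = φ_{xy} + l_{g(x,y)}` and
comparing gives `α(x,y,z)·b = 0`; the mirror computation with `ψ_z ψ_y ψ_x b` gives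
`b·α(x,y,z) = 0`. -/

section

variable {φ ψ : R → AddMonoid.End A} {g : R → R → A}

theorem alphaObs_mul_eq_zero
    (hφ_mul : ∀ (x : R) (a b : A), φ x (a * b) = φ x a * b)
    (hbal_left : ∀ (x : R) (a b : A), a * φ x b = ψ x a * b)
    (hφ_comp : ∀ (x y : R) (a : A), φ x (φ y a) = φ (x * y) a + g x y * a)
    (x y z : R) (b : A) : alphaObs φ ψ g x y z * b = 0 := by
  have hyz : φ x (φ y (φ z b)) = φ (x * y * z) b + (φ x (g y z) + g x (y * z)) * b := by
    rw [hφ_comp y z, map_add, hφ_comp x, hφ_mul, mul_assoc, add_mul]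
    abel
  have hxy : φ x (φ y (φ z b)) = φ (x * y * z) b + (g (x * y) z + ψ z (g x y)) * b := by
    rw [hφ_comp x y, hφ_comp (x * y) z, hbal_left, add_mul]
    abel
  have key := add_left_cancel (hyz.symm.trans hxy)
  calc alphaObs φ ψ g x y z * b
      = (φ x (g y z) + g x (y * z)) * b - (g (x * y) z + ψ z (g x y)) * b := by
        simp only [alphaObs, sub_mul, add_mul]
        abel
    _ = 0 := by rw [key, sub_self]

theorem mul_alphaObs_eq_zero
    (hψ_mul : ∀ (x : R) (a b : A), ψ x (b * a) = b * ψ x a)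
    (hbal_right : ∀ (x : R) (a b : A), ψ x b * a = b * φ x a)
    (hψ_comp : ∀ (x y : R) (a : A), ψ y (ψ x a) = ψ (x * y) a + a * g x y)
    (x y z : R) (b : A) : b * alphaObs φ ψ g x y z = 0 := by
  have hxy : ψ z (ψ y (ψ x b)) = ψ (x * y * z) b + b * (g (x * y) z + ψ z (g x y)) := by
    rw [hψ_comp x y, map_add, hψ_comp (x * y) z, hψ_mul, mul_add]
    abel
  have hyz : ψ z (ψ y (ψ x b)) = ψ (x * y * z) b + b * (φ x (g y z) + g x (y * z)) := by
    rw [hψ_comp y z, hψ_comp x (y * z), hbal_right, mul_assoc, mul_add]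
    abel
  have key := add_left_cancel (hyz.symm.trans hxy)
  calc b * alphaObs φ ψ g x y z
      = b * (φ x (g y z) + g x (y * z)) - b * (g (x * y) z + ψ z (g x y)) := by
        simp only [alphaObs, mul_sub, mul_add]
        abel
    _ = 0 := by rw [key, sub_self]

end

theorem alpha_mem_bicenter_general
    (φ ψ : R → AddMonoid.End A) (f g : R → R → A)
    (h : IsPreExtension φ ψ f g) :
    ∀ x y z : R, alphaObs φ ψ g x y z ∈ bicenter A := by
  obtain ⟨-, -, hbal_left, hφ_mul, hψ_mul, hbal_right, -, hφ_comp, hψ_comp, -, -⟩ := h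
  intro x y z b
  exact ⟨alphaObs_mul_eq_zero hφ_mul hbal_left hφ_comp x y z b,
    mul_alphaObs_eq_zero hψ_mul hbal_right hψ_comp x y z b⟩

/-- The obstruction component
`α(x,y,z) = φ_x(g(y,z)) − g(xy,z) + g(x,yz) − ψ_z(g(x,y))` lies in the bicenter. -/
theorem alpha_mem_bicenter
    [Nontrivial R] (φ ψ : R → AddMonoid.End A) (f g : R → R → A)
    (h : IsPreExtension φ ψ f g) :
    ∀ x y z : R, alphaObs φ ψ g x y z ∈ bicenter A :=
  alpha_mem_bicenter_general φ ψ f g h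
end

section
/- In the pre-extension setting, the obstruction components ξ(x,y,z) = f(y,z) − f(x+y,z) + f(x,y+z) − f(x,y) and η(x,y) = f(x,y) − f(y,x) belong to the bicenter K_A for all x, y, z ∈ R, i.e. they multiply every element of A to zero on both sides. -/
variable {R A : Type*}

variable [Ring R] [NonUnitalRing A]

/-! Acting on `A` from either side, `f` becomes the additive coboundary of `φ`, resp. `ψ`; the
obstructions `ξ` and `η` vanish on coboundaries because addition in `R` is associative and
commutative. -/

section Coboundary

variable {F : R → R → A} {u : R → A}

theorem xiObs_eq_zero_of_coboundary (hF : ∀ x y, F x y = u x + u y - u (x + y)) (x y z : R) :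
    xiObs F x y z = 0 := by
  simp only [xiObs, hF, add_assoc]
  abel

theorem etaObs_eq_zero_of_coboundary {S : Type*} [AddCommMagma S] {F : S → S → A} {u : S → A}
    (hF : ∀ x y, F x y = u x + u y - u (x + y)) (x y : S) : etaObs F x y = 0 := by
  rw [etaObs, hF, hF, add_comm y, add_comm (u y), sub_self]

end Coboundary

section Multiplication

variable (f : R → R → A) (b : A) (x y z : R)

theorem xiObs_mul : xiObs f x y z * b = xiObs (fun x y => f x y * b) x y z := by
  simp only [xiObs, sub_mul, add_mul]

theorem mul_xiObs : b * xiObs f x y z = xiObs (fun x y => b * f x y) x y z := by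
  simp only [xiObs, mul_sub, mul_add]

theorem etaObs_mul {S : Type*} (f : S → S → A) (b : A) (x y : S) :
    etaObs f x y * b = etaObs (fun x y => f x y * b) x y :=
  sub_mul _ _ _

theorem mul_etaObs {S : Type*} (f : S → S → A) (b : A) (x y : S) :
    b * etaObs f x y = etaObs (fun x y => b * f x y) x y :=
  mul_sub _ _ _

end Multiplication

namespace IsPreExtension

variable {φ ψ : R → AddMonoid.End A} {f g : R → R → A}

theorem f_mul_eq (h : IsPreExtension φ ψ f g) (a : A) (x y : R) :
    f x y * a = φ x a + φ y a - φ (x + y) a :=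
  eq_sub_of_add_eq' (h.2.2.2.2.2.2.2.2.2.1 x y a).symm

theorem mul_f_eq (h : IsPreExtension φ ψ f g) (a : A) (x y : R) :
    a * f x y = ψ x a + ψ y a - ψ (x + y) a :=
  eq_sub_of_add_eq' (h.2.2.2.2.2.2.2.2.2.2 x y a).symm

end IsPreExtension

theorem xi_eta_mem_bicenter_general
    (φ ψ : R → AddMonoid.End A) (f g : R → R → A)
    (h : IsPreExtension φ ψ f g) :
    ∀ x y z : R, xiObs f x y z ∈ bicenter A ∧ etaObs f x y ∈ bicenter A := by
  intro x y z
  refine ⟨fun b => ⟨?_, ?_⟩, fun b => ⟨?_, ?_⟩⟩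
  · rw [xiObs_mul, xiObs_eq_zero_of_coboundary (h.f_mul_eq b)]
  · rw [mul_xiObs, xiObs_eq_zero_of_coboundary (h.mul_f_eq b)]
  · rw [etaObs_mul, etaObs_eq_zero_of_coboundary (h.f_mul_eq b)]
  · rw [mul_etaObs, etaObs_eq_zero_of_coboundary (h.mul_f_eq b)]

/-- The obstruction components
`ξ(x,y,z) = f(y,z) − f(x+y,z) + f(x,y+z) − f(x,y)` and `η(x,y) = f(x,y) − f(y,x)`
lie in the bicenter. -/
theorem xi_eta_mem_bicenter
    [Nontrivial R] (φ ψ : R → AddMonoid.End A) (f g : R → R → A)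
    (h : IsPreExtension φ ψ f g) :
    ∀ x y z : R, xiObs f x y z ∈ bicenter A ∧ etaObs f x y ∈ bicenter A :=
  xi_eta_mem_bicenter_general φ ψ f g h
end

section
/- In the pre-extension setting, the obstruction components λ(x,y,z) = φ_x(f(y,z)) − f(xy,xz) + g(x,y+z) − g(x,y) − g(x,z) and ρ(x,y,z) = ψ_z(f(x,y)) − f(xz,yz) + g(x+y,z) − g(x,z) − g(y,z) belong to the bicenter K_A for all x, y, z ∈ R, i.e. they multiply every element of A to zero on both sides. -/
variable {R A : Type*}

variable [Ring R] [NonUnitalRing A]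

/-!
Multiply λ(x,y,z) or ρ(x,y,z) by `a ∈ A` on either side and use the compatibility relations
to move the outer `φ_x` or `ψ_z` past the product. Every remaining product with a value of `f`
or `g` is then expressed through the operators alone, e.g. `f(x,y)·a = φ_x a + φ_y a − φ_{x+y} a`
and `g(x,y)·a = φ_x φ_y a − φ_{xy} a`, and the resulting terms cancel in pairs by distributivity
`x(y+z) = xy + xz` (resp. `(x+y)z = xz + yz`) in `R`.
-/

namespace IsPreExtension

variable {φ ψ : R → AddMonoid.End A} {f g : R → R → A}

theorem f_mul (h : IsPreExtension φ ψ f g) (x y : R) (a : A) :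
    f x y * a = φ x a + φ y a - φ (x + y) a := by
  obtain ⟨-, -, -, -, -, -, -, -, -, hφ_add, -⟩ := h
  rw [hφ_add]
  abel

theorem mul_f (h : IsPreExtension φ ψ f g) (x y : R) (a : A) :
    a * f x y = ψ x a + ψ y a - ψ (x + y) a := by
  obtain ⟨-, -, -, -, -, -, -, -, -, -, hψ_add⟩ := h
  rw [hψ_add]
  abel

theorem g_mul (h : IsPreExtension φ ψ f g) (x y : R) (a : A) :
    g x y * a = φ x (φ y a) - φ (x * y) a := by
  obtain ⟨-, -, -, -, -, -, -, hφ_comp, -⟩ := h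
  rw [hφ_comp]
  abel

theorem mul_g (h : IsPreExtension φ ψ f g) (x y : R) (a : A) :
    a * g x y = ψ y (ψ x a) - ψ (x * y) a := by
  obtain ⟨-, -, -, -, -, -, -, -, hψ_comp, -⟩ := h
  rw [hψ_comp]
  abel

theorem lambdaObs_mul (h : IsPreExtension φ ψ f g) (x y z : R) (a : A) :
    lambdaObs φ f g x y z * a = 0 := by
  have hφ : φ x (f y z) * a = φ x (f y z * a) := (h.2.2.2.1 x (f y z) a).symm
  simp only [lambdaObs, sub_mul, add_mul, hφ, h.f_mul, h.g_mul, map_sub, map_add, mul_add]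
  abel

theorem mul_lambdaObs (h : IsPreExtension φ ψ f g) (x y z : R) (a : A) :
    a * lambdaObs φ f g x y z = 0 := by
  have hφ : a * φ x (f y z) = ψ x a * f y z := h.2.2.1 x a (f y z)
  simp only [lambdaObs, mul_sub, mul_add, hφ, h.mul_f, h.mul_g]
  abel

theorem rhoObs_mul (h : IsPreExtension φ ψ f g) (x y z : R) (a : A) :
    rhoObs ψ f g x y z * a = 0 := by
  have hψ : ψ z (f x y) * a = f x y * φ z a := h.2.2.2.2.2.1 z a (f x y)
  simp only [rhoObs, sub_mul, add_mul, hψ, h.f_mul, h.g_mul]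
  abel

theorem mul_rhoObs (h : IsPreExtension φ ψ f g) (x y z : R) (a : A) :
    a * rhoObs ψ f g x y z = 0 := by
  have hψ : a * ψ z (f x y) = ψ z (a * f x y) := (h.2.2.2.2.1 z (f x y) a).symm
  simp only [rhoObs, mul_sub, mul_add, hψ, h.mul_f, h.mul_g, map_sub, map_add, add_mul]
  abel

end IsPreExtension

theorem lambda_rho_mem_bicenter_general
    (φ ψ : R → AddMonoid.End A) (f g : R → R → A)
    (h : IsPreExtension φ ψ f g) :
    ∀ x y z : R,
      lambdaObs φ f g x y z ∈ bicenter A ∧ rhoObs ψ f g x y z ∈ bicenter A :=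
  fun x y z =>
    ⟨fun a => ⟨h.lambdaObs_mul x y z a, h.mul_lambdaObs x y z a⟩,
      fun a => ⟨h.rhoObs_mul x y z a, h.mul_rhoObs x y z a⟩⟩

/-- The obstruction components
`λ(x,y,z) = φ_x(f(y,z)) − f(xy,xz) + g(x,y+z) − g(x,y) − g(x,z)` and
`ρ(x,y,z) = ψ_z(f(x,y)) − f(xz,yz) + g(x+y,z) − g(x,z) − g(y,z)`
lie in the bicenter. -/
theorem lambda_rho_mem_bicenter
    [Nontrivial R] (φ ψ : R → AddMonoid.End A) (f g : R → R → A)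
    (h : IsPreExtension φ ψ f g) :
    ∀ x y z : R,
      lambdaObs φ f g x y z ∈ bicenter A ∧ rhoObs ψ f g x y z ∈ bicenter A :=
  lambda_rho_mem_bicenter_general φ ψ f g h
end

section
/- (Lemma 3.) In the pre-extension setting, let μ, ν : R × R → K_A be arbitrary functions with values in the bicenter, and set f' = f + μ, g' = g + ν. Let ξ', η', α', λ', ρ' be defined from f', g' (and the same φ, ψ) by the same formulas as ξ, η, α, λ, ρ. Then for all x, y, z ∈ R: ξ'(x,y,z) = ξ(x,y,z) + μ(y,z) − μ(x+y,z) + μ(x,y+z) − μ(x,y); η'(x,y) = η(x,y) + μ(x,y) − μ(y,x); α'(x,y,z) = α(x,y,z) + φ_x(ν(y,z)) − ν(xy,z) + ν(x,yz) − ψ_z(ν(x,y)); λ'(x,y,z) = λ(x,y,z) + ν(x,y+z) − ν(x,y) − ν(x,z) + φ_x(μ(y,z)) − μ(xy,xz); ρ'(x,y,z) = ρ(x,y,z) + ν(x+y,z) − ν(x,z) − ν(y,z) + ψ_z(μ(x,y)) − μ(xz,yz). -/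
variable {R A : Type*}

variable [Ring R] [NonUnitalRing A]

section Additivity

theorem etaObs_add {S B : Type*} [NonUnitalRing B] (f μ : S → S → B) (x y : S) :
    etaObs (f + μ) x y = etaObs f x y + etaObs μ x y := by
  simp only [etaObs, Pi.add_apply]
  abel

variable (φ ψ : R → AddMonoid.End A) (f g μ ν : R → R → A) (x y z : R)

theorem xiObs_add : xiObs (f + μ) x y z = xiObs f x y z + xiObs μ x y z := by
  simp only [xiObs, Pi.add_apply]
  abel

theorem alphaObs_add :
    alphaObs φ ψ (g + ν) x y z = alphaObs φ ψ g x y z + alphaObs φ ψ ν x y z := by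
  simp only [alphaObs, Pi.add_apply, map_add]
  abel

theorem lambdaObs_add :
    lambdaObs φ (f + μ) (g + ν) x y z = lambdaObs φ f g x y z + lambdaObs φ μ ν x y z := by
  simp only [lambdaObs, Pi.add_apply, map_add]
  abel

theorem rhoObs_add :
    rhoObs ψ (f + μ) (g + ν) x y z = rhoObs ψ f g x y z + rhoObs ψ μ ν x y z := by
  simp only [rhoObs, Pi.add_apply, map_add]
  abel

end Additivity

theorem obstruction_change_of_factor_sets_general
    (φ ψ : R → AddMonoid.End A) (f g : R → R → A)
    (μ ν : R → R → A)
    (f' g' : R → R → A)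
    (hf' : ∀ x y : R, f' x y = f x y + μ x y)
    (hg' : ∀ x y : R, g' x y = g x y + ν x y) :
    ∀ x y z : R,
      xiObs f' x y z
        = xiObs f x y z + μ y z - μ (x + y) z + μ x (y + z) - μ x y ∧
      etaObs f' x y
        = etaObs f x y + μ x y - μ y x ∧
      alphaObs φ ψ g' x y z
        = alphaObs φ ψ g x y z + φ x (ν y z) - ν (x * y) z + ν x (y * z)
            - ψ z (ν x y) ∧
      lambdaObs φ f' g' x y z
        = lambdaObs φ f g x y z + ν x (y + z) - ν x y - ν x z + φ x (μ y z)
            - μ (x * y) (x * z) ∧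
      rhoObs ψ f' g' x y z
        = rhoObs ψ f g x y z + ν (x + y) z - ν x z - ν y z + ψ z (μ x y)
            - μ (x * z) (y * z) := by
  obtain rfl : f' = f + μ := funext₂ hf'
  obtain rfl : g' = g + ν := funext₂ hg'
  intro x y z
  refine ⟨?_, ?_, ?_, ?_, ?_⟩
  · rw [xiObs_add, xiObs.eq_1 μ]; abel
  · rw [etaObs_add, etaObs.eq_1 μ]; abel
  · rw [alphaObs_add, alphaObs.eq_1 φ ψ ν]; abel
  · rw [lambdaObs_add, lambdaObs.eq_1 φ μ ν]; abel
  · rw [rhoObs_add, rhoObs.eq_1 ψ μ ν]; abel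

/-- Lemma 3: replacing `f, g` by `f' = f + μ`, `g' = g + ν` with
`μ, ν` taking values in the bicenter changes the obstruction components by the
stated coboundary terms. -/
theorem obstruction_change_of_factor_sets
    [Nontrivial R] (φ ψ : R → AddMonoid.End A) (f g : R → R → A)
    (h : IsPreExtension φ ψ f g)
    (μ ν : R → R → A)
    (hμ : ∀ x y : R, μ x y ∈ bicenter A)
    (hν : ∀ x y : R, ν x y ∈ bicenter A)
    (f' g' : R → R → A)
    (hf' : ∀ x y : R, f' x y = f x y + μ x y)
    (hg' : ∀ x y : R, g' x y = g x y + ν x y) :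
    ∀ x y z : R,
      xiObs f' x y z
        = xiObs f x y z + μ y z - μ (x + y) z + μ x (y + z) - μ x y ∧
      etaObs f' x y
        = etaObs f x y + μ x y - μ y x ∧
      alphaObs φ ψ g' x y z
        = alphaObs φ ψ g x y z + φ x (ν y z) - ν (x * y) z + ν x (y * z)
            - ψ z (ν x y) ∧
      lambdaObs φ f' g' x y z
        = lambdaObs φ f g x y z + ν x (y + z) - ν x y - ν x z + φ x (μ y z)
            - μ (x * y) (x * z) ∧
      rhoObs ψ f' g' x y z
        = rhoObs ψ f g x y z + ν (x + y) z - ν x z - ν y z + ψ z (μ x y)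
            - μ (x * z) (y * z) :=
  obstruction_change_of_factor_sets_general φ ψ f g μ ν f' g' hf' hg'
end

section
/- (Proposition 6, relations 11–13.) In the pre-extension setting, for all x, y, z, t ∈ R: α(x,y,z+t) − α(x,y,z) − α(x,y,t) = φ_x(λ(y,z,t)) + λ(x,yz,yt) − λ(xy,z,t); α(x,y+z,t) − α(x,y,t) − α(x,z,t) = φ_x(ρ(y,z,t)) − ρ(xy,xz,t) + λ(x,yt,zt) − ψ_t(λ(x,y,z)); and α(x+y,z,t) − α(x,z,t) − α(y,z,t) = −ψ_t(ρ(x,y,z)) − ρ(xz,yz,t) + ρ(x,y,zt). -/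
variable {R A : Type*}

variable [Ring R] [NonUnitalRing A]

/-! After expanding the definitions, everything cancels formally except the terms in which two
structure maps meet (`φ_x φ_y`, `φ_x ψ_t`, `ψ_t ψ_z`) or a structure map has a sum as index
(`φ_{x+y}`, `ψ_{z+t}`); the composition, commutation and additivity laws of the pre-extension
turn these into the remaining products with `f` and `g`. -/

namespace IsPreExtension

variable {φ ψ : R → AddMonoid.End A} {f g : R → R → A}

theorem phi_comp (h : IsPreExtension φ ψ f g) (x y : R) (a : A) :
    φ x (φ y a) = φ (x * y) a + g x y * a :=
  h.2.2.2.2.2.2.2.1 x y a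

theorem psi_comp (h : IsPreExtension φ ψ f g) (x y : R) (a : A) :
    ψ y (ψ x a) = ψ (x * y) a + a * g x y :=
  h.2.2.2.2.2.2.2.2.1 x y a

theorem phi_psi_comm (h : IsPreExtension φ ψ f g) (x y : R) (a : A) :
    φ x (ψ y a) = ψ y (φ x a) :=
  h.2.2.2.2.2.2.1 x y a

theorem phi_add (h : IsPreExtension φ ψ f g) (x y : R) (a : A) :
    φ (x + y) a = φ x a + φ y a - f x y * a :=
  eq_sub_of_add_eq (h.2.2.2.2.2.2.2.2.2.1 x y a).symm

theorem psi_add (h : IsPreExtension φ ψ f g) (x y : R) (a : A) :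
    ψ (x + y) a = ψ x a + ψ y a - a * f x y :=
  eq_sub_of_add_eq (h.2.2.2.2.2.2.2.2.2.2 x y a).symm

theorem alphaObs_add_right (h : IsPreExtension φ ψ f g) (x y z t : R) :
    alphaObs φ ψ g x y (z + t) - alphaObs φ ψ g x y z - alphaObs φ ψ g x y t
      = φ x (lambdaObs φ f g y z t) + lambdaObs φ f g x (y * z) (y * t)
        - lambdaObs φ f g (x * y) z t := by
  simp only [alphaObs, lambdaObs, map_sub, map_add, h.psi_add, h.phi_comp, mul_add, mul_assoc]
  abel

theorem alphaObs_add_middle (h : IsPreExtension φ ψ f g) (x y z t : R) :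
    alphaObs φ ψ g x (y + z) t - alphaObs φ ψ g x y t - alphaObs φ ψ g x z t
      = φ x (rhoObs ψ f g y z t) - rhoObs ψ f g (x * y) (x * z) t
        + lambdaObs φ f g x (y * t) (z * t) - ψ t (lambdaObs φ f g x y z) := by
  simp only [alphaObs, lambdaObs, rhoObs, map_sub, map_add, h.phi_psi_comm, add_mul, mul_add,
    mul_assoc]
  abel

theorem alphaObs_add_left (h : IsPreExtension φ ψ f g) (x y z t : R) :
    alphaObs φ ψ g (x + y) z t - alphaObs φ ψ g x z t - alphaObs φ ψ g y z t
      = -ψ t (rhoObs ψ f g x y z) - rhoObs ψ f g (x * z) (y * z) t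
        + rhoObs ψ f g x y (z * t) := by
  simp only [alphaObs, rhoObs, map_sub, map_add, h.phi_add, h.psi_comp, add_mul, mul_assoc]
  abel

end IsPreExtension

theorem alpha_lambda_rho_relations_general
    (φ ψ : R → AddMonoid.End A) (f g : R → R → A)
    (h : IsPreExtension φ ψ f g) :
    ∀ x y z t : R,
      alphaObs φ ψ g x y (z + t) - alphaObs φ ψ g x y z - alphaObs φ ψ g x y t
        = φ x (lambdaObs φ f g y z t) + lambdaObs φ f g x (y * z) (y * t)
          - lambdaObs φ f g (x * y) z t ∧
      alphaObs φ ψ g x (y + z) t - alphaObs φ ψ g x y t - alphaObs φ ψ g x z t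
        = φ x (rhoObs ψ f g y z t) - rhoObs ψ f g (x * y) (x * z) t
          + lambdaObs φ f g x (y * t) (z * t) - ψ t (lambdaObs φ f g x y z) ∧
      alphaObs φ ψ g (x + y) z t - alphaObs φ ψ g x z t - alphaObs φ ψ g y z t
        = -ψ t (rhoObs ψ f g x y z) - rhoObs ψ f g (x * z) (y * z) t
          + rhoObs ψ f g x y (z * t) := fun x y z t =>
  ⟨h.alphaObs_add_right x y z t, h.alphaObs_add_middle x y z t, h.alphaObs_add_left x y z t⟩

/-- Proposition 6, relations 11–13: compatibilities of `α` with
`λ` and `ρ`. -/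
theorem alpha_lambda_rho_relations
    [Nontrivial R] (φ ψ : R → AddMonoid.End A) (f g : R → R → A)
    (h : IsPreExtension φ ψ f g) :
    ∀ x y z t : R,
      alphaObs φ ψ g x y (z + t) - alphaObs φ ψ g x y z - alphaObs φ ψ g x y t
        = φ x (lambdaObs φ f g y z t) + lambdaObs φ f g x (y * z) (y * t)
          - lambdaObs φ f g (x * y) z t ∧
      alphaObs φ ψ g x (y + z) t - alphaObs φ ψ g x y t - alphaObs φ ψ g x z t
        = φ x (rhoObs ψ f g y z t) - rhoObs ψ f g (x * y) (x * z) t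
          + lambdaObs φ f g x (y * t) (z * t) - ψ t (lambdaObs φ f g x y z) ∧
      alphaObs φ ψ g (x + y) z t - alphaObs φ ψ g x z t - alphaObs φ ψ g y z t
        = -ψ t (rhoObs ψ f g x y z) - rhoObs ψ f g (x * z) (y * z) t
          + rhoObs ψ f g x y (z * t) :=
  alpha_lambda_rho_relations_general φ ψ f g h
end

section
/- (Proposition 6, relation 14: Hochschild 3-cocycle condition for α.) In the pre-extension setting, for all x, y, z, t ∈ R: φ_x(α(y,z,t)) − α(xy,z,t) + α(x,yz,t) − α(x,y,zt) + ψ_t(α(x,y,z)) = 0. -/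
variable {R A : Type*}

variable [Ring R] [NonUnitalRing A]

/- Expanding the alternating sum, `φ_x ∘ φ_y` and `ψ_t ∘ ψ_z` each produce the product
`g(x,y)·g(z,t)`, with opposite signs; `φ_x ∘ ψ_t = ψ_t ∘ φ_x` and associativity of `R` cancel
all remaining terms in pairs. -/
theorem alphaObs_hochschild_cocycle (φ ψ : R → AddMonoid.End A) (g : R → R → A)
    (hφψ : ∀ (x y : R) (a : A), φ x (ψ y a) = ψ y (φ x a))
    (hφφ : ∀ (x y : R) (a : A), φ x (φ y a) = φ (x * y) a + g x y * a)
    (hψψ : ∀ (x y : R) (a : A), ψ y (ψ x a) = ψ (x * y) a + a * g x y) (x y z t : R) :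
    φ x (alphaObs φ ψ g y z t) - alphaObs φ ψ g (x * y) z t
      + alphaObs φ ψ g x (y * z) t - alphaObs φ ψ g x y (z * t)
      + ψ t (alphaObs φ ψ g x y z) = 0 := by
  simp only [alphaObs, map_sub, map_add]
  rw [hφφ x y, hψψ z t, hφψ x t, mul_assoc y z t, mul_assoc x y z]
  abel

theorem alpha_hochschild_three_cocycle_general
    (φ ψ : R → AddMonoid.End A) (f g : R → R → A)
    (h : IsPreExtension φ ψ f g) :
    ∀ x y z t : R,
      φ x (alphaObs φ ψ g y z t) - alphaObs φ ψ g (x * y) z t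
        + alphaObs φ ψ g x (y * z) t - alphaObs φ ψ g x y (z * t)
        + ψ t (alphaObs φ ψ g x y z) = 0 := by
  obtain ⟨-, -, -, -, -, -, hφψ, hφφ, hψψ, -, -⟩ := h
  exact alphaObs_hochschild_cocycle φ ψ g hφψ hφφ hψψ

/-- Proposition 6, relation 14: `α` satisfies the Hochschild
3-cocycle condition. -/
theorem alpha_hochschild_three_cocycle
    [Nontrivial R] (φ ψ : R → AddMonoid.End A) (f g : R → R → A)
    (h : IsPreExtension φ ψ f g) :
    ∀ x y z t : R,
      φ x (alphaObs φ ψ g y z t) - alphaObs φ ψ g (x * y) z t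
        + alphaObs φ ψ g x (y * z) t - alphaObs φ ψ g x y (z * t)
        + ψ t (alphaObs φ ψ g x y z) = 0 :=
  alpha_hochschild_three_cocycle_general φ ψ f g h
end

section
/- (Construction of an extension from a vanishing obstruction, part of Theorem 5.) In the pre-extension setting, assume additionally the normalization conditions f(x,0) = f(0,y) = 0 and g(x,0) = g(0,y) = g(1,y) = g(y,1) = 0 for all x, y ∈ R, and assume that ξ, η, α, λ, ρ are identically zero. Then the set S = A × R with operations (a,x) + (b,y) = (a + b + f(x,y), x+y) and (a,x)·(b,y) = (a·b + φ_x(b) + ψ_y(a) + g(x,y), xy) is a ring with additive identity (0,0) and multiplicative identity (0,1); the projection σ : S → R, σ(a,x) = x, is a surjective ring homomorphism with σ(0,1) = 1; its kernel is A × {0}; and the map a ↦ (a,0) is an isomorphism of rings from A onto this kernel. -/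
/-!
Each ring axiom for the crossed product `A × R` reduces, in the `R`-coordinate, to the same
axiom in `R`, and in the `A`-coordinate to an identity between `f`, `g`, `φ`, `ψ` and the
multiplication of `A`. After expanding with the relations of the pre-extension datum, what
remains of that identity is exactly the vanishing of one obstruction component: `ξ` for
associativity and `η` for commutativity of addition, `α` for associativity of
multiplication, `λ` and `ρ` for the two distributive laws. The normalization of `f` and `g`
makes `(0,0)` and `(0,1)` neutral and `a ↦ (a,0)` multiplicative.
-/

variable {R A : Type*}

variable [Ring R] [NonUnitalRing A]

def crossedAdd (f : R → R → A) (p q : A × R) : A × R :=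
  (p.1 + q.1 + f p.2 q.2, p.2 + q.2)

def crossedMul (φ ψ : R → AddMonoid.End A) (g : R → R → A) (p q : A × R) : A × R :=
  (p.1 * q.1 + φ p.2 q.1 + ψ q.2 p.1 + g p.2 q.2, p.2 * q.2)

variable {φ ψ : R → AddMonoid.End A} {f g : R → R → A}

theorem crossedAdd_assoc (hxi : ∀ x y z : R, xiObs f x y z = 0) (p q r : A × R) :
    crossedAdd f (crossedAdd f p q) r = crossedAdd f p (crossedAdd f q r) := by
  have cocycle : f q.2 r.2 - f (p.2 + q.2) r.2 + f p.2 (q.2 + r.2) = f p.2 q.2 :=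
    sub_eq_zero.mp (hxi p.2 q.2 r.2)
  refine Prod.ext ?_ (add_assoc _ _ _)
  simp only [crossedAdd]
  rw [← cocycle]
  abel

theorem crossedAdd_comm (heta : ∀ x y : R, etaObs f x y = 0) (p q : A × R) :
    crossedAdd f p q = crossedAdd f q p := by
  refine Prod.ext ?_ (add_comm _ _)
  simp only [crossedAdd]
  rw [sub_eq_zero.mp (heta p.2 q.2)]
  abel

theorem zero_crossedAdd (hf : ∀ y : R, f 0 y = 0) (p : A × R) :
    crossedAdd f (0, 0) p = p := by
  simp [crossedAdd, hf]

theorem exists_crossedAdd_eq_zero (p : A × R) : ∃ q : A × R, crossedAdd f p q = (0, 0) :=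
  ⟨(-p.1 - f p.2 (-p.2), -p.2), Prod.ext (by simp only [crossedAdd]; abel) (add_neg_cancel _)⟩

theorem crossedMul_assoc (h : IsPreExtension φ ψ f g)
    (halpha : ∀ x y z : R, alphaObs φ ψ g x y z = 0) (p q r : A × R) :
    crossedMul φ ψ g (crossedMul φ ψ g p q) r = crossedMul φ ψ g p (crossedMul φ ψ g q r) := by
  obtain ⟨-, -, -, hφ_mul, hψ_mul, hψ_mul_φ, hφψ_comm, hφ_comp, hψ_comp, -, -⟩ := h
  obtain ⟨a, x⟩ := p
  obtain ⟨b, y⟩ := q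
  obtain ⟨c, z⟩ := r
  have cocycle : ψ z (g x y) = φ x (g y z) - g (x * y) z + g x (y * z) :=
    (sub_eq_zero.mp (halpha x y z)).symm
  refine Prod.ext ?_ (mul_assoc _ _ _)
  simp only [crossedMul, add_mul, mul_add, map_add]
  rw [hφ_mul x b c, hψ_mul_φ y c a, hφ_comp x y c, hψ_mul z b a, hψ_comp y z a,
    ← hφψ_comm x z b, cocycle, mul_assoc a b c]
  abel

theorem one_crossedMul (h : IsPreExtension φ ψ f g) (hg : ∀ y : R, g 1 y = 0) (p : A × R) :
    crossedMul φ ψ g (0, 1) p = p := by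
  simp [crossedMul, h.1, hg]

theorem crossedMul_one (h : IsPreExtension φ ψ f g) (hg : ∀ y : R, g y 1 = 0) (p : A × R) :
    crossedMul φ ψ g p (0, 1) = p := by
  simp [crossedMul, h.2.1, hg]

theorem crossedMul_crossedAdd (h : IsPreExtension φ ψ f g)
    (hlambda : ∀ x y z : R, lambdaObs φ f g x y z = 0) (p q r : A × R) :
    crossedMul φ ψ g p (crossedAdd f q r) =
      crossedAdd f (crossedMul φ ψ g p q) (crossedMul φ ψ g p r) := by
  obtain ⟨-, -, -, -, -, -, -, -, -, -, hψ_add⟩ := h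
  obtain ⟨a, x⟩ := p
  obtain ⟨b, y⟩ := q
  obtain ⟨c, z⟩ := r
  have cocycle : φ x (f y z) = f (x * y) (x * z) - g x (y + z) + g x y + g x z := by
    rw [← sub_eq_zero, ← hlambda x y z, lambdaObs]
    abel
  refine Prod.ext ?_ (mul_add _ _ _)
  simp only [crossedMul, crossedAdd, mul_add, map_add]
  rw [cocycle, eq_sub_of_add_eq (hψ_add y z a).symm]
  abel

theorem crossedAdd_crossedMul (h : IsPreExtension φ ψ f g)
    (hrho : ∀ x y z : R, rhoObs ψ f g x y z = 0) (p q r : A × R) :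
    crossedMul φ ψ g (crossedAdd f p q) r =
      crossedAdd f (crossedMul φ ψ g p r) (crossedMul φ ψ g q r) := by
  obtain ⟨-, -, -, -, -, -, -, -, -, hφ_add, -⟩ := h
  obtain ⟨a, x⟩ := p
  obtain ⟨b, y⟩ := q
  obtain ⟨c, z⟩ := r
  have cocycle : ψ z (f x y) = f (x * z) (y * z) - g (x + y) z + g x z + g y z := by
    rw [← sub_eq_zero, ← hrho x y z, rhoObs]
    abel
  refine Prod.ext ?_ (add_mul _ _ _)
  simp only [crossedMul, crossedAdd, add_mul, map_add]
  rw [cocycle, eq_sub_of_add_eq (hφ_add x y c).symm]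
  abel

theorem crossedAdd_inl (hf : f 0 0 = 0) (a b : A) :
    crossedAdd f (a, 0) (b, 0) = (a + b, 0) := by
  simp [crossedAdd, hf]

theorem crossedMul_inl (h : IsPreExtension φ ψ f g) (hf : f 0 0 = 0) (hg : g 0 0 = 0)
    (a b : A) : crossedMul φ ψ g (a, 0) (b, 0) = (a * b, 0) := by
  obtain ⟨-, -, -, -, -, -, -, -, -, hφ_add, hψ_add⟩ := h
  have hφ_zero : φ 0 b = 0 := by simpa [hf] using hφ_add 0 0 b
  have hψ_zero : ψ 0 a = 0 := by simpa [hf] using hψ_add 0 0 a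
  simp [crossedMul, hφ_zero, hψ_zero, hg]

theorem extension_from_vanishing_obstruction_general
    (φ ψ : R → AddMonoid.End A) (f g : R → R → A)
    (h : IsPreExtension φ ψ f g)
    -- normalization conditions
    (hf0 : ∀ x y : R, f x 0 = 0 ∧ f 0 y = 0)
    (hg0 : ∀ x y : R, g x 0 = 0 ∧ g 0 y = 0 ∧ g 1 y = 0 ∧ g y 1 = 0)
    -- vanishing obstruction
    (hxi : ∀ x y z : R, xiObs f x y z = 0)
    (heta : ∀ x y : R, etaObs f x y = 0)
    (halpha : ∀ x y z : R, alphaObs φ ψ g x y z = 0)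
    (hlambda : ∀ x y z : R, lambdaObs φ f g x y z = 0)
    (hrho : ∀ x y z : R, rhoObs ψ f g x y z = 0)
    -- the crossed-product operations on S = A × R
    (add' mul' : A × R → A × R → A × R)
    (hadd' : ∀ p q : A × R, add' p q = (p.1 + q.1 + f p.2 q.2, p.2 + q.2))
    (hmul' : ∀ p q : A × R,
      mul' p q = (p.1 * q.1 + φ p.2 q.1 + ψ q.2 p.1 + g p.2 q.2, p.2 * q.2)) :
    -- S is a ring:
    (∀ p q r : A × R, add' (add' p q) r = add' p (add' q r)) ∧
    (∀ p q : A × R, add' p q = add' q p) ∧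
    (∀ p : A × R, add' ((0 : A), (0 : R)) p = p) ∧
    (∀ p : A × R, ∃ q : A × R, add' p q = ((0 : A), (0 : R))) ∧
    (∀ p q r : A × R, mul' (mul' p q) r = mul' p (mul' q r)) ∧
    (∀ p : A × R, mul' ((0 : A), (1 : R)) p = p ∧ mul' p ((0 : A), (1 : R)) = p) ∧
    (∀ p q r : A × R, mul' p (add' q r) = add' (mul' p q) (mul' p r)) ∧
    (∀ p q r : A × R, mul' (add' p q) r = add' (mul' p r) (mul' q r)) ∧
    -- the projection σ(a, x) = x is a surjective ring homomorphism with σ(0,1) = 1: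
    (∀ x : R, ∃ p : A × R, p.2 = x) ∧
    (∀ p q : A × R, (add' p q).2 = p.2 + q.2) ∧
    (∀ p q : A × R, (mul' p q).2 = p.2 * q.2) ∧
    (((0 : A), (1 : R)).2 = (1 : R)) ∧
    -- its kernel is A × {0}:
    (∀ p : A × R, p.2 = 0 ↔ ∃ a : A, p = (a, (0 : R))) ∧
    -- a ↦ (a, 0) is a ring isomorphism of A onto the kernel:
    (∀ a b : A, add' (a, (0 : R)) (b, (0 : R)) = (a + b, (0 : R))) ∧
    (∀ a b : A, mul' (a, (0 : R)) (b, (0 : R)) = (a * b, (0 : R))) ∧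
    (Function.Injective fun a : A => ((a, (0 : R)) : A × R)) ∧
    (Set.range (fun a : A => ((a, (0 : R)) : A × R)) = {p : A × R | p.2 = 0}) := by
  obtain rfl : add' = crossedAdd f := funext fun p => funext (hadd' p)
  obtain rfl : mul' = crossedMul φ ψ g := funext fun p => funext (hmul' p)
  have mem_ker : ∀ p : A × R, p.2 = 0 ↔ ∃ a : A, p = (a, (0 : R)) := fun p =>
    ⟨fun hp => ⟨p.1, Prod.ext rfl hp⟩, by rintro ⟨a, rfl⟩; rfl⟩
  refine ⟨crossedAdd_assoc hxi, crossedAdd_comm heta, zero_crossedAdd fun y => (hf0 0 y).2,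
    exists_crossedAdd_eq_zero, crossedMul_assoc h halpha,
    fun p => ⟨one_crossedMul h (fun y => (hg0 0 y).2.2.1) p,
      crossedMul_one h (fun y => (hg0 0 y).2.2.2) p⟩,
    crossedMul_crossedAdd h hlambda, crossedAdd_crossedMul h hrho,
    fun x => ⟨(0, x), rfl⟩, fun _ _ => rfl, fun _ _ => rfl, rfl, mem_ker,
    crossedAdd_inl (hf0 0 0).1, crossedMul_inl h (hf0 0 0).1 (hg0 0 0).1,
    fun _ _ hab => congrArg Prod.fst hab,
    Set.ext fun p => (exists_congr fun _ => eq_comm).trans (mem_ker p).symm⟩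

/-- part of Theorem 5: if the obstruction of a (normalized)
pre-extension datum vanishes identically, then the crossed-product operations make
`S = A × R` a ring; the projection onto `R` is a surjective ring homomorphism
sending `(0,1)` to `1`, its kernel is `A × {0}`, and `a ↦ (a,0)` is a ring
isomorphism of `A` onto this kernel. -/
theorem extension_from_vanishing_obstruction
    [Nontrivial R] (φ ψ : R → AddMonoid.End A) (f g : R → R → A)
    (h : IsPreExtension φ ψ f g)
    -- normalization conditions
    (hf0 : ∀ x y : R, f x 0 = 0 ∧ f 0 y = 0)
    (hg0 : ∀ x y : R, g x 0 = 0 ∧ g 0 y = 0 ∧ g 1 y = 0 ∧ g y 1 = 0)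
    -- vanishing obstruction
    (hxi : ∀ x y z : R, xiObs f x y z = 0)
    (heta : ∀ x y : R, etaObs f x y = 0)
    (halpha : ∀ x y z : R, alphaObs φ ψ g x y z = 0)
    (hlambda : ∀ x y z : R, lambdaObs φ f g x y z = 0)
    (hrho : ∀ x y z : R, rhoObs ψ f g x y z = 0)
    -- the crossed-product operations on S = A × R
    (add' mul' : A × R → A × R → A × R)
    (hadd' : ∀ p q : A × R, add' p q = (p.1 + q.1 + f p.2 q.2, p.2 + q.2))
    (hmul' : ∀ p q : A × R,
      mul' p q = (p.1 * q.1 + φ p.2 q.1 + ψ q.2 p.1 + g p.2 q.2, p.2 * q.2)) :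
    -- S is a ring:
    (∀ p q r : A × R, add' (add' p q) r = add' p (add' q r)) ∧
    (∀ p q : A × R, add' p q = add' q p) ∧
    (∀ p : A × R, add' ((0 : A), (0 : R)) p = p) ∧
    (∀ p : A × R, ∃ q : A × R, add' p q = ((0 : A), (0 : R))) ∧
    (∀ p q r : A × R, mul' (mul' p q) r = mul' p (mul' q r)) ∧
    (∀ p : A × R, mul' ((0 : A), (1 : R)) p = p ∧ mul' p ((0 : A), (1 : R)) = p) ∧
    (∀ p q r : A × R, mul' p (add' q r) = add' (mul' p q) (mul' p r)) ∧
    (∀ p q r : A × R, mul' (add' p q) r = add' (mul' p r) (mul' q r)) ∧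
    -- the projection σ(a, x) = x is a surjective ring homomorphism with σ(0,1) = 1:
    (∀ x : R, ∃ p : A × R, p.2 = x) ∧
    (∀ p q : A × R, (add' p q).2 = p.2 + q.2) ∧
    (∀ p q : A × R, (mul' p q).2 = p.2 * q.2) ∧
    (((0 : A), (1 : R)).2 = (1 : R)) ∧
    -- its kernel is A × {0}:
    (∀ p : A × R, p.2 = 0 ↔ ∃ a : A, p = (a, (0 : R))) ∧
    -- a ↦ (a, 0) is a ring isomorphism of A onto the kernel:
    (∀ a b : A, add' (a, (0 : R)) (b, (0 : R)) = (a + b, (0 : R))) ∧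
    (∀ a b : A, mul' (a, (0 : R)) (b, (0 : R)) = (a * b, (0 : R))) ∧
    (Function.Injective fun a : A => ((a, (0 : R)) : A × R)) ∧
    (Set.range (fun a : A => ((a, (0 : R)) : A × R)) = {p : A × R | p.2 = 0}) :=
  extension_from_vanishing_obstruction_general φ ψ f g h hf0 hg0 hxi heta halpha hlambda hrho add'
    mul' hadd' hmul'
end
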